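/- Type-1 error control of the N-SCORE test: Let (r_{0,n}, r_{1,n}) be an i.i.d. sequence of pairs of [0,1]-valued random variables with r_{0,n} independent of r_{1,n}, suppose the null hypothesis E[r_{1,1}] ≤ E[r_{0,1}] holds, and let (ξ_n) be a [0,1]-valued predictable sequence. Define X_0 = 1, X_n = X_{n−1}(1 + ξ_n(r_{1,n} − r_{0,n})), and the test statistic X̄_n = max_{0≤k≤n} X_k. Then for any α ∈ (0,1), P[∃ n : X̄_n ≥ 1/α] ≤ α. -/

import Mathlib

/-!
Under the null hypothesis the increment `r₁ₙ - r₀ₙ` is independent of the past and has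
nonpositive mean, so its conditional expectation given the past is `≤ 0`. Since `ξₙ ∈ [0, 1]` is
predictable, the wealth `X` is then a nonnegative supermartingale started at `1`, and Ville's
inequality `P(∃ n, c ≤ Xₙ) ≤ E[X₀] / c` with `c = 1/α` gives the bound. Ville's inequality on a
finite horizon is optional stopping at the first time `X` enters `[c, ∞)`.
-/

open MeasureTheory ProbabilityTheory Set

namespace MeasureTheory.Filtration

variable {Ω : Type*} {m : MeasurableSpace Ω}

/-- A process is predictable for `𝓕`, with trivial initial information, iff it is adapted to
`𝓕.lag`. -/
def lag (𝓕 : Filtration ℕ m) : Filtration ℕ m where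
  seq
    | 0 => ⊥
    | n + 1 => 𝓕 n
  mono' := monotone_nat_of_le_succ fun
    | 0 => bot_le
    | n + 1 => 𝓕.mono n.le_succ
  le'
    | 0 => bot_le
    | n + 1 => 𝓕.le n

@[simp] lemma lag_zero (𝓕 : Filtration ℕ m) : 𝓕.lag 0 = ⊥ := rfl

end MeasureTheory.Filtration

section Ville

variable {Ω : Type*} {m0 : MeasurableSpace Ω} {μ : Measure Ω} [IsFiniteMeasure μ]
  {𝒢 : Filtration ℕ m0} {X : ℕ → Ω → ℝ}

lemma MeasureTheory.Supermartingale.mul_measureReal_exists_le_le (hX : Supermartingale X 𝒢 μ)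
    (hnonneg : ∀ᵐ ω ∂μ, ∀ n, 0 ≤ X n ω) (c : ℝ) (N : ℕ) :
    c * μ.real {ω | ∃ k ≤ N, c ≤ X k ω} ≤ μ[X 0] := by
  set τ : Ω → WithTop ℕ := fun ω => (hittingBtwn X (Ici c) 0 N ω : ℕ)
  have hτ : IsStoppingTime 𝒢 τ :=
    hX.stronglyAdapted.adapted.isStoppingTime_hittingBtwn measurableSet_Ici
  have hτN : ∀ ω, τ ω ≤ N := fun ω => WithTop.coe_le_coe.mpr (hittingBtwn_le ω)
  have hint : Integrable (stoppedValue X τ) μ := integrable_stoppedValue ℕ hτ hX.integrable hτN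
  have hA : MeasurableSet {ω | ∃ k ≤ N, c ≤ X k ω} := by
    simp only [ofPred_exists]
    exact .iUnion fun k => (MeasurableSet.const _).inter
      (((hX.stronglyMeasurable k).mono (𝒢.le k)).measurable measurableSet_Ici)
  have hhit : ∀ ω ∈ {ω | ∃ k ≤ N, c ≤ X k ω}, c ≤ stoppedValue X τ ω := by
    rintro ω ⟨k, hk, hck⟩
    exact stoppedValue_hittingBtwn_mem ⟨k, ⟨k.zero_le, hk⟩, hck⟩
  have hstop : μ[stoppedValue X τ] ≤ μ[X 0] := by
    have := hX.neg.expected_stoppedValue_mono (isStoppingTime_const 𝒢 0) hτ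
      (fun ω => WithTop.coe_le_coe.mpr (Nat.zero_le _)) hτN
    simpa [stoppedValue, integral_neg] using this
  calc c * μ.real {ω | ∃ k ≤ N, c ≤ X k ω}
      ≤ ∫ ω in {ω | ∃ k ≤ N, c ≤ X k ω}, stoppedValue X τ ω ∂μ :=
        setIntegral_ge_of_const_le_real hA (measure_ne_top _ _) hhit hint.integrableOn
    _ ≤ μ[stoppedValue X τ] := setIntegral_le_integral hint (hnonneg.mono fun ω h => h _)
    _ ≤ μ[X 0] := hstop

lemma MeasureTheory.Supermartingale.measure_exists_le_le (hX : Supermartingale X 𝒢 μ)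
    (hnonneg : ∀ᵐ ω ∂μ, ∀ n, 0 ≤ X n ω) {c : ℝ} (hc : 0 < c) :
    μ {ω | ∃ n, c ≤ X n ω} ≤ ENNReal.ofReal (μ[X 0] / c) := by
  have hunion : {ω | ∃ n, c ≤ X n ω} = ⋃ N, {ω | ∃ k ≤ N, c ≤ X k ω} := by
    ext ω
    simp only [mem_ofPred_eq, mem_iUnion]
    exact ⟨fun ⟨n, hn⟩ => ⟨n, n, le_rfl, hn⟩, fun ⟨_, k, _, hk⟩ => ⟨k, hk⟩⟩
  have hmono : Monotone fun N => {ω | ∃ k ≤ N, c ≤ X k ω} :=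
    fun _ _ hNM _ ⟨k, hk, hck⟩ => ⟨k, hk.trans hNM, hck⟩
  rw [hunion, hmono.measure_iUnion]
  refine iSup_le fun N => ?_
  rw [← ofReal_measureReal (measure_ne_top _ _)]
  refine ENNReal.ofReal_le_ofReal ((le_div_iff₀' hc).2 ?_)
  exact hX.mul_measureReal_exists_le_le hnonneg c N

end Ville

section Wealth

variable {Ω : Type*} {m0 : MeasurableSpace Ω} {μ : Measure Ω} {𝒢 : Filtration ℕ m0}
  {ξ D X : ℕ → Ω → ℝ}

lemma wealth_nonneg_and_le_two_pow {ω : Ω} (hX0 : X 0 ω = 1)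
    (hrec : ∀ n, X (n + 1) ω = X n ω * (1 + ξ n ω * D n ω))
    (hξ : ∀ n, ξ n ω ∈ Icc (0 : ℝ) 1) (hD : ∀ n, |D n ω| ≤ 1) (n : ℕ) :
    0 ≤ X n ω ∧ X n ω ≤ 2 ^ n := by
  induction n with
  | zero => simp [hX0]
  | succ n ih =>
    obtain ⟨hξ0, hξ1⟩ := hξ n
    obtain ⟨hD0, hD1⟩ := abs_le.1 (hD n)
    have hfac0 : 0 ≤ 1 + ξ n ω * D n ω := by nlinarith
    have hfac2 : 1 + ξ n ω * D n ω ≤ 2 := by nlinarith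
    rw [hrec, pow_succ]
    exact ⟨mul_nonneg ih.1 hfac0, mul_le_mul ih.2 hfac2 hfac0 (by positivity)⟩

lemma wealth_supermartingale_and_nonneg [IsFiniteMeasure μ] (hξm : StronglyAdapted 𝒢 ξ)
    (hDm : ∀ n, StronglyMeasurable[𝒢 (n + 1)] (D n))
    (hξ : ∀ n ω, ξ n ω ∈ Icc (0 : ℝ) 1) (hD : ∀ n, ∀ᵐ ω ∂μ, |D n ω| ≤ 1)
    (hDcond : ∀ n, μ[D n | 𝒢 n] ≤ᵐ[μ] 0)
    (hX0 : ∀ ω, X 0 ω = 1) (hrec : ∀ n ω, X (n + 1) ω = X n ω * (1 + ξ n ω * D n ω)) :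
    Supermartingale X 𝒢 μ ∧ ∀ᵐ ω ∂μ, ∀ n, 0 ≤ X n ω := by
  have hbdd : ∀ᵐ ω ∂μ, ∀ n, 0 ≤ X n ω ∧ X n ω ≤ 2 ^ n := by
    filter_upwards [ae_all_iff.2 hD] with ω hDω n
    exact wealth_nonneg_and_le_two_pow (hX0 ω) (hrec · ω) (hξ · ω) hDω n
  have hXm : StronglyAdapted 𝒢 X := by
    intro n
    induction n with
    | zero => simpa [funext hX0] using stronglyMeasurable_const
    | succ n ih =>
      rw [show X (n + 1) = X n * (1 + ξ n * D n) from funext (hrec n)]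
      exact (ih.mono (𝒢.mono n.le_succ)).mul (stronglyMeasurable_const.add
        (((hξm n).mono (𝒢.mono n.le_succ)).mul (hDm n)))
  have hXint : ∀ n, Integrable (X n) μ := fun n =>
    .of_bound ((hXm n).mono (𝒢.le n)).aestronglyMeasurable (2 ^ n)
      (hbdd.mono fun ω h => by rw [Real.norm_eq_abs, abs_of_nonneg (h n).1]; exact (h n).2)
  have hDint : ∀ n, Integrable (D n) μ := fun n =>
    .of_bound ((hDm n).mono (𝒢.le _)).aestronglyMeasurable 1 (hD n)
  refine ⟨supermartingale_nat hXm hXint fun n => ?_, hbdd.mono fun ω h n => (h n).1⟩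
  have hincr : X (n + 1) = X n + (X n * ξ n) * D n := by
    ext ω; simp only [hrec, Pi.add_apply, Pi.mul_apply]; ring
  have hincr_int : Integrable ((X n * ξ n) * D n) μ := by
    simpa [hincr] using (hXint (n + 1)).sub (hXint n)
  have hcond : μ[(X n * ξ n) * D n | 𝒢 n] =ᵐ[μ] (X n * ξ n) * μ[D n | 𝒢 n] :=
    condExp_mul_of_stronglyMeasurable_left ((hXm n).mul (hξm n)) hincr_int (hDint n)
  have hXn : μ[X n | 𝒢 n] = X n := condExp_of_stronglyMeasurable (𝒢.le n) (hXm n) (hXint n)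
  filter_upwards [condExp_add (hXint n) hincr_int (𝒢 n), hcond, hDcond n, hbdd]
    with ω hadd hmul hneg hbddω
  rw [hincr, hadd, Pi.add_apply, hXn, hmul, Pi.mul_apply, Pi.mul_apply]
  have : X n ω * ξ n ω * μ[D n | 𝒢 n] ω ≤ 0 :=
    mul_nonpos_of_nonneg_of_nonpos (mul_nonneg (hbddω n).1 (hξ n ω).1) hneg
  linarith

end Wealth

lemma ProbabilityTheory.iIndepFun.condExp_lag_natural_ae_eq {Ω β : Type*} {m0 : MeasurableSpace Ω}
    {μ : Measure Ω} [MeasurableSpace β] [NormedAddCommGroup β] [BorelSpace β] {Z : ℕ → Ω → β}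
    (hZ : ∀ n, StronglyMeasurable (Z n)) (hind : iIndepFun Z μ) {g : β → ℝ} (hg : Measurable g)
    (n : ℕ) :
    μ[fun ω => g (Z n ω) | (Filtration.natural Z hZ).lag n] =ᵐ[μ]
      fun _ => μ[fun ω => g (Z n ω)] := by
  have := hind.isProbabilityMeasure
  cases n with
  | zero => rw [Filtration.lag_zero, condExp_bot]
  | succ n =>
    exact condExp_indep_eq (hZ (n + 1)).measurable.comap_le (Filtration.le _ _)
      (hg.comp (comap_measurable _)).stronglyMeasurable
      (hind.indep_comap_natural_of_lt hZ n.lt_succ_self)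

theorem nscore_type_one_error_control
    {Ω : Type*} {m0 : MeasurableSpace Ω} (μ : Measure Ω) [IsProbabilityMeasure μ]
    (r0 r1 : ℕ → Ω → ℝ)
    (hpm : ∀ n, StronglyMeasurable (fun ω => (r0 n ω, r1 n ω)))
    (hbdd0 : ∀ n, ∀ᵐ ω ∂μ, r0 n ω ∈ Set.Icc (0 : ℝ) 1)
    (hbdd1 : ∀ n, ∀ᵐ ω ∂μ, r1 n ω ∈ Set.Icc (0 : ℝ) 1)
    (hiid : iIndepFun (fun n ω => (r0 n ω, r1 n ω)) μ)
    (hident : ∀ n, IdentDistrib (fun ω => (r0 n ω, r1 n ω)) (fun ω => (r0 0 ω, r1 0 ω)) μ μ)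
    -- null hypothesis: policy 1 is not better than policy 0
    (hnull : ∫ ω, r1 0 ω ∂μ ≤ ∫ ω, r0 0 ω ∂μ)
    (ξ : ℕ → Ω → ℝ)
    (hξbdd : ∀ n ω, ξ n ω ∈ Set.Icc (0 : ℝ) 1)
    (hξ0 : StronglyMeasurable[⊥] (ξ 0))
    (hξpred : ∀ n, StronglyMeasurable[(Filtration.natural (fun n ω => (r0 n ω, r1 n ω)) hpm) n]
      (ξ (n + 1)))
    (X : ℕ → Ω → ℝ)
    (hX0 : ∀ ω, X 0 ω = 1)
    (hXrec : ∀ n ω, X (n + 1) ω = X n ω * (1 + ξ n ω * (r1 n ω - r0 n ω)))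
    (α : ℝ) (hα : α ∈ Set.Ioo (0 : ℝ) 1) :
    μ {ω | ∃ n, 1 / α ≤ (Finset.range (n + 1)).sup' (by simp) fun k => X k ω}
      ≤ ENNReal.ofReal α := by
  set ℱ := Filtration.natural (fun n ω => (r0 n ω, r1 n ω)) hpm
  have hdiff : Measurable fun p : ℝ × ℝ => p.2 - p.1 := measurable_snd.sub measurable_fst
  have hDm : ∀ n, StronglyMeasurable[ℱ.lag (n + 1)] fun ω => r1 n ω - r0 n ω := fun n =>
    (hdiff.comp (Filtration.stronglyAdapted_natural hpm n).measurable).stronglyMeasurable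
  have hD : ∀ n, ∀ᵐ ω ∂μ, |r1 n ω - r0 n ω| ≤ 1 := fun n => by
    filter_upwards [hbdd0 n, hbdd1 n] with ω h0 h1
    exact abs_sub_le_of_nonneg_of_le h1.1 h1.2 h0.1 h0.2
  have hmean : ∀ n, μ[fun ω => r1 n ω - r0 n ω] ≤ 0 := fun n => by
    have hsame := ((hident n).comp hdiff).integral_eq
    simp only [Function.comp_def] at hsame
    rw [hsame, integral_sub (.of_mem_Icc 0 1 (hpm 0).measurable.snd.aemeasurable (hbdd1 0))
      (.of_mem_Icc 0 1 (hpm 0).measurable.fst.aemeasurable (hbdd0 0))]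
    exact sub_nonpos.2 hnull
  have hDcond : ∀ n, μ[fun ω => r1 n ω - r0 n ω | ℱ.lag n] ≤ᵐ[μ] 0 := fun n =>
    (hiid.condExp_lag_natural_ae_eq hpm hdiff n).trans_le (.of_forall fun _ => hmean n)
  have hξm : StronglyAdapted ℱ.lag ξ
    | 0 => hξ0
    | n + 1 => hξpred n
  obtain ⟨hsuper, hnonneg⟩ := wealth_supermartingale_and_nonneg hξm hDm hξbdd hD hDcond hX0 hXrec
  calc μ {ω | ∃ n, 1 / α ≤ (Finset.range (n + 1)).sup' (by simp) fun k => X k ω}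
      ≤ μ {ω | ∃ n, 1 / α ≤ X n ω} := measure_mono fun ω ⟨n, hn⟩ => by
        obtain ⟨k, -, hk⟩ := (Finset.le_sup'_iff _).1 hn
        exact ⟨k, hk⟩
    _ ≤ ENNReal.ofReal (μ[X 0] / (1 / α)) :=
        hsuper.measure_exists_le_le hnonneg (one_div_pos.2 hα.1)
    _ = ENNReal.ofReal α := by simp [hX0]
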